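/- Limit-free formula for the directed Ricci curvature: for distinct x, y ∈ V, κ(x,y) = inf{∇_{xy}ℒf : f ∈ Lip₁(V), ∇_{xy}f = 1}, where κ(x,y) := lim_{ε→0} κ_ε(x,y)/ε. -/

import Mathlib

open Finset Filter Topology MeasureTheory
open scoped Classical

noncomputable section

variable {V : Type*}

/-- Vertex weight `μ(x) = Σ_y μ_{xy}`. -/
def vdeg [Fintype V] (μ : V → V → ℝ) (x : V) : ℝ := ∑ y, μ x y

/-- Transition probability kernel `P(x,y) = μ_{xy}/μ(x)`. -/
def transP [Fintype V] (μ : V → V → ℝ) (x y : V) : ℝ := μ x y / vdeg μ x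

/-- `m` is the Perron measure of `(V,μ)`. -/
def IsPerron [Fintype V] (μ : V → V → ℝ) (m : V → ℝ) : Prop :=
  (∀ x, 0 < m x) ∧ (∑ x, m x = 1) ∧ ∀ x, m x = ∑ y, m y * transP μ y x

/-- Mean transition probability kernel `𝒫 = (P + ←P)/2`. -/
def meanK [Fintype V] (μ : V → V → ℝ) (m : V → ℝ) (x y : V) : ℝ :=
  (transP μ x y + m y / m x * transP μ y x) / 2

/-- There is a directed path of length `n` from `x` to `y`. -/
def HasPathLen (μ : V → V → ℝ) (x y : V) (n : ℕ) : Prop :=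
  ∃ c : ℕ → V, c 0 = x ∧ c n = y ∧ ∀ i < n, 0 < μ (c i) (c (i + 1))

/-- The (non-symmetric) graph distance. -/
def gdist (μ : V → V → ℝ) (x y : V) : ℝ :=
  sInf {r : ℝ | ∃ n : ℕ, (r : ℝ) = (n : ℝ) ∧ HasPathLen μ x y n}

/-- The graph is simple: no loops. -/
def IsSimpleW (μ : V → V → ℝ) : Prop := ∀ x, μ x x = 0

/-- The edge weight is nonnegative. -/
def Nonneg (μ : V → V → ℝ) : Prop := ∀ x y, 0 ≤ μ x y

/-- The graph is strongly connected. -/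
def StronglyConnectedW (μ : V → V → ℝ) : Prop := ∀ x y, ∃ n, HasPathLen μ x y n

/-- `π` is a coupling of the probability measures `ν₀, ν₁`. -/
def IsCoupling [Fintype V] (π : V → V → ℝ) (ν₀ ν₁ : V → ℝ) : Prop :=
  (∀ x y, 0 ≤ π x y) ∧ (∀ x, ∑ y, π x y = ν₀ x) ∧ (∀ y, ∑ x, π x y = ν₁ y)

/-- The L¹-Wasserstein distance with cost `d`. -/
def Wass [Fintype V] (d : V → V → ℝ) (ν₀ ν₁ : V → ℝ) : ℝ :=
  sInf {c : ℝ | ∃ π, IsCoupling π ν₀ ν₁ ∧ c = ∑ x, ∑ y, d x y * π x y}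

/-- The probability measure `ν^ε_x`. -/
def nu [Fintype V] (P : V → V → ℝ) (ε : ℝ) (x z : V) : ℝ :=
  if z = x then 1 - ε else ε * P x z

/-- `κ_ε(x,y) = 1 − W(ν^ε_x, ν^ε_y)/d(x,y)`. -/
def kappaEps [Fintype V] (μ : V → V → ℝ) (m : V → ℝ) (ε : ℝ) (x y : V) : ℝ :=
  1 - Wass (gdist μ) (nu (meanK μ m) ε x) (nu (meanK μ m) ε y) / gdist μ x y

/-- The (positive) Chung Laplacian associated with a kernel `P`. -/
def chungL [Fintype V] (P : V → V → ℝ) (f : V → ℝ) (x : V) : ℝ :=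
  f x - ∑ y, P x y * f y

/-- The negative Laplacian `Δ = −ℒ`. -/
def negL [Fintype V] (P : V → V → ℝ) (f : V → ℝ) (x : V) : ℝ :=
  (∑ y, P x y * f y) - f x

/-- `f` is 1-Lipschitz with respect to the non-symmetric distance `d`. -/
def Lip1 (d : V → V → ℝ) (f : V → ℝ) : Prop := ∀ x y, f y - f x ≤ d x y

/-- The asymptotic mean curvature `ℋ_x = ℒρ_x(x)`. -/
def Hout [Fintype V] (μ : V → V → ℝ) (m : V → ℝ) (x : V) : ℝ :=
  chungL (meanK μ m) (fun y => gdist μ x y) x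

/-- The reverse asymptotic mean curvature `←ℋ_x = ℒ←ρ_x(x)`. -/
def Hin [Fintype V] (μ : V → V → ℝ) (m : V → ℝ) (x : V) : ℝ :=
  chungL (meanK μ m) (fun y => gdist μ y x) x

/-- The mixed asymptotic mean curvature `ℋ(x,y) = −(ℋ_x + ←ℋ_y)`. -/
def Hmix [Fintype V] (μ : V → V → ℝ) (m : V → ℝ) (x y : V) : ℝ :=
  -(Hout μ m x + Hin μ m y)

/-- The neighborhood `𝒩_x = N_x ∪ ←N_x`. -/
def nbr [Fintype V] (μ : V → V → ℝ) (x : V) : Finset V :=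
  Finset.univ.filter (fun y => 0 < μ x y ∨ 0 < μ y x)

/-!
For every `f`, `∑ f ν^ε_y - ∑ f ν^ε_x = (f y - f x) - ε (ℒf y - ℒf x)`, and by Kantorovich duality
`W(ν^ε_x, ν^ε_y)` is the supremum of this quantity over `f ∈ Lip₁`. An admissible `f`
(`f y - f x = d(x,y)`) therefore gives `κ_ε / ε ≤ ∇_{xy} ℒf`, so `κ` is a lower bound. Conversely,
near-optimal potentials `f_ε`, normalised by `f_ε x = 0`, range over a compact set; along a
sequence `ε → 0` they converge to some `g ∈ Lip₁`, and passing to the limit in the near-optimality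
inequality gives `∇_{xy} g = 1` (since `κ_ε → 0`) and `∇_{xy} ℒg ≤ κ`. So `κ` is the least element.

Duality on a finite space is obtained by separating `(ν₀, ν₁, t)`, for `t < W`, from the compact
convex image of the simplex of transport plans under `π ↦ (marginals, cost)`; the separating
functional gives potentials with `h b - g a ≤ d a b`, and the `d`-transform
`f b = min_a (g a + d a b)` turns them into a 1-Lipschitz function between them.
-/

structure IsQuasiMetric (d : V → V → ℝ) : Prop where
  nonneg : ∀ a b, 0 ≤ d a b
  self : ∀ a, d a a = 0
  triangle : ∀ a b c, d a c ≤ d a b + d b c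

section Kantorovich

variable [Fintype V] {d : V → V → ℝ} {ν₀ ν₁ : V → ℝ}

theorem isCoupling_mul (h₀ : ∀ a, 0 ≤ ν₀ a) (h₁ : ∀ b, 0 ≤ ν₁ b) (hs₀ : ∑ a, ν₀ a = 1)
    (hs₁ : ∑ b, ν₁ b = 1) : IsCoupling (fun a b => ν₀ a * ν₁ b) ν₀ ν₁ :=
  ⟨fun a b => mul_nonneg (h₀ a) (h₁ b), fun a => by rw [← mul_sum, hs₁, mul_one],
    fun b => by rw [← sum_mul, hs₀, one_mul]⟩

theorem wass_le_cost (hd : ∀ a b, 0 ≤ d a b) {π : V → V → ℝ} (hπ : IsCoupling π ν₀ ν₁) :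
    Wass d ν₀ ν₁ ≤ ∑ a, ∑ b, d a b * π a b := by
  refine csInf_le ⟨0, ?_⟩ ⟨π, hπ, rfl⟩
  rintro c ⟨π', hπ', rfl⟩
  exact sum_nonneg fun a _ => sum_nonneg fun b _ => mul_nonneg (hd a b) (hπ'.1 a b)

theorem sum_mul_sub_sum_mul_le_cost {f : V → ℝ} (hf : Lip1 d f) {π : V → V → ℝ}
    (hπ : IsCoupling π ν₀ ν₁) :
    ∑ b, f b * ν₁ b - ∑ a, f a * ν₀ a ≤ ∑ a, ∑ b, d a b * π a b := by
  have hgain : ∑ b, f b * ν₁ b - ∑ a, f a * ν₀ a = ∑ a, ∑ b, (f b - f a) * π a b := by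
    simp only [sub_mul, sum_sub_distrib, ← mul_sum, hπ.2.1]
    rw [sum_comm]
    simp only [← mul_sum, hπ.2.2]
  rw [hgain]
  exact sum_le_sum fun a _ => sum_le_sum fun b _ =>
    mul_le_mul_of_nonneg_right (hf a b) (hπ.1 a b)

theorem sum_mul_sub_sum_mul_le_wass {f : V → ℝ} (hf : Lip1 d f) {π : V → V → ℝ}
    (hπ : IsCoupling π ν₀ ν₁) : ∑ b, f b * ν₁ b - ∑ a, f a * ν₀ a ≤ Wass d ν₀ ν₁ :=
  le_csInf ⟨_, π, hπ, rfl⟩ fun _ ⟨_, hπ', hc⟩ => hc ▸ sum_mul_sub_sum_mul_le_cost hf hπ'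

variable (d) in
def marginalsAndCost : (V × V → ℝ) →ₗ[ℝ] (V → ℝ) × (V → ℝ) × ℝ where
  toFun π := (fun a => ∑ b, π (a, b), fun b => ∑ a, π (a, b), ∑ p, d p.1 p.2 * π p)
  map_add' π ρ := by ext <;> simp [sum_add_distrib, mul_add]
  map_smul' c π := by ext <;> simp [mul_sum, mul_left_comm]

theorem marginalsAndCost_apply (π : V × V → ℝ) :
    marginalsAndCost d π =
      (fun a => ∑ b, π (a, b), fun b => ∑ a, π (a, b), ∑ p, d p.1 p.2 * π p) :=
  rfl

theorem marginalsAndCost_single (a b : V) :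
    marginalsAndCost d (Pi.single (a, b) 1) = (Pi.single a 1, Pi.single b 1, d a b) := by
  ext <;>
    simp [marginalsAndCost_apply, Pi.single_apply, Prod.ext_iff, Fintype.sum_prod_type, ite_and]

theorem strongDual_apply_prod (F : StrongDual ℝ ((V → ℝ) × (V → ℝ) × ℝ)) (a b : V → ℝ)
    (c : ℝ) : F (a, b, c) = ∑ i, a i * F (Pi.single i 1, 0, 0) +
      ∑ i, b i * F (0, Pi.single i 1, 0) + c * F (0, 0, 1) := by
  have hpi : ∀ L : (V → ℝ) →ₗ[ℝ] ℝ, ∀ v, L v = ∑ i, v i * L (Pi.single i 1) := fun L v => by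
    conv_lhs => rw [pi_eq_sum_univ' v]
    simp
  have hsplit : ((a, b, c) : (V → ℝ) × (V → ℝ) × ℝ) = (a, 0, 0) + (0, b, 0) + c • (0, 0, 1) := by
    ext <;> simp
  have ha : F (a, 0, 0) = ∑ i, a i * F (Pi.single i 1, 0, 0) :=
    hpi (F.toLinearMap ∘ₗ LinearMap.inl ℝ _ _) a
  have hb : F (0, b, 0) = ∑ i, b i * F (0, Pi.single i 1, 0) :=
    hpi (F.toLinearMap ∘ₗ LinearMap.inr ℝ _ _ ∘ₗ LinearMap.inl ℝ _ _) b
  rw [hsplit, map_add, map_add, map_smul, smul_eq_mul, ha, hb]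

theorem exists_separating_potentials (h₀ : ∀ a, 0 ≤ ν₀ a) (h₁ : ∀ b, 0 ≤ ν₁ b)
    (hs₀ : ∑ a, ν₀ a = 1) (hs₁ : ∑ b, ν₁ b = 1) {t : ℝ}
    (ht : ∀ π, IsCoupling π ν₀ ν₁ → t < ∑ a, ∑ b, d a b * π a b) :
    ∃ φ ψ : V → ℝ, ∃ s u : ℝ, 0 < s ∧ (∀ a b, u < φ a + ψ b + d a b * s) ∧
      ∑ a, φ a * ν₀ a + ∑ b, ψ b * ν₁ b + t * s < u := by
  have hnot : (ν₀, ν₁, t) ∉ marginalsAndCost d '' stdSimplex ℝ (V × V) := by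
    rintro ⟨π, hπ, hTπ⟩
    simp only [marginalsAndCost_apply, Prod.mk.injEq] at hTπ
    obtain ⟨hm₀, hm₁, hcost⟩ := hTπ
    have := ht (fun a b => π (a, b)) ⟨fun a b => hπ.1 _, congrFun hm₀, congrFun hm₁⟩
    rw [← Fintype.sum_prod_type', hcost] at this
    exact lt_irrefl t this
  have hK := (isCompact_stdSimplex ℝ (V × V)).image
    (marginalsAndCost d).continuous_of_finiteDimensional
  obtain ⟨F, u, hFp, hFK⟩ := geometric_hahn_banach_point_closed
    ((convex_stdSimplex ℝ _).linear_image _) hK.isClosed hnot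
  set φ : V → ℝ := fun a => F (Pi.single a 1, 0, 0)
  set ψ : V → ℝ := fun b => F (0, Pi.single b 1, 0)
  set s := F (0, 0, 1)
  have hν : ∑ a, φ a * ν₀ a + ∑ b, ψ b * ν₁ b + t * s < u := by
    rw [strongDual_apply_prod] at hFp
    simpa only [mul_comm] using hFp
  refine ⟨φ, ψ, s, u, ?_, fun a b => ?_, hν⟩
  · -- the product coupling costs more than `t`, which forces the cost coefficient to be positive
    set π₀ : V × V → ℝ := fun p => ν₀ p.1 * ν₁ p.2
    have hπ₀ : π₀ ∈ stdSimplex ℝ (V × V) :=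
      ⟨fun p => mul_nonneg (h₀ _) (h₁ _), by simp [π₀, Fintype.sum_prod_type, ← mul_sum, hs₀, hs₁]⟩
    have hcost := ht _ (isCoupling_mul h₀ h₁ hs₀ hs₁)
    rw [← Fintype.sum_prod_type'] at hcost
    have hu : u < ∑ a, φ a * ν₀ a + ∑ b, ψ b * ν₁ b + (∑ p, d p.1 p.2 * π₀ p) * s := by
      have := hFK _ ⟨π₀, hπ₀, rfl⟩
      simp only [marginalsAndCost_apply, π₀, ← mul_sum, ← sum_mul, hs₀, hs₁, mul_one,
        one_mul] at this
      rw [strongDual_apply_prod] at this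
      simpa only [mul_comm] using this
    nlinarith
  · have := hFK _ ⟨_, single_mem_stdSimplex ℝ (a, b), rfl⟩
    rw [marginalsAndCost_single, strongDual_apply_prod] at this
    simpa [Pi.single_apply] using this

theorem exists_potentials_of_lt_cost (h₀ : ∀ a, 0 ≤ ν₀ a) (h₁ : ∀ b, 0 ≤ ν₁ b)
    (hs₀ : ∑ a, ν₀ a = 1) (hs₁ : ∑ b, ν₁ b = 1) {t : ℝ}
    (ht : ∀ π, IsCoupling π ν₀ ν₁ → t < ∑ a, ∑ b, d a b * π a b) :
    ∃ g h : V → ℝ, (∀ a b, h b - g a ≤ d a b) ∧ t < ∑ b, h b * ν₁ b - ∑ a, g a * ν₀ a := by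
  obtain ⟨φ, ψ, s, u, hs, hpair, hν⟩ := exists_separating_potentials h₀ h₁ hs₀ hs₁ ht
  refine ⟨fun a => φ a / s, fun b => (u - ψ b) / s, fun a b => ?_, ?_⟩
  · rw [div_sub_div_same, div_le_iff₀ hs]
    linarith [hpair a b]
  · have hgain : ∑ b, (u - ψ b) / s * ν₁ b - ∑ a, φ a / s * ν₀ a
        = (u - ∑ b, ψ b * ν₁ b - ∑ a, φ a * ν₀ a) / s := by
      simp only [div_mul_eq_mul_div, ← sum_div, sub_mul, sum_sub_distrib, ← mul_sum, hs₁]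
      ring
    rw [hgain, lt_div_iff₀ hs]
    linarith

theorem exists_lip1_between [Nonempty V] (hd₀ : ∀ a, d a a = 0)
    (htri : ∀ a b c, d a c ≤ d a b + d b c) {g h : V → ℝ} (hgh : ∀ a b, h b - g a ≤ d a b) :
    ∃ f, Lip1 d f ∧ (∀ b, h b ≤ f b) ∧ ∀ a, f a ≤ g a := by
  set f : V → ℝ := fun b => univ.inf' univ_nonempty fun a => g a + d a b
  refine ⟨f, fun a b => ?_, fun b => le_inf' _ _ fun a _ => by linarith [hgh a b],
    fun a => (inf'_le _ (mem_univ a)).trans_eq (by rw [hd₀, add_zero])⟩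
  obtain ⟨a₀, -, ha₀⟩ := exists_mem_eq_inf' univ_nonempty fun a' => g a' + d a' a
  have := inf'_le (fun a' => g a' + d a' b) (mem_univ a₀)
  have := htri a₀ a b
  simp only [f] at ha₀ ⊢
  linarith

theorem exists_lip1_lt_sum_mul_sub_sum_mul (hd : IsQuasiMetric d) (h₀ : ∀ a, 0 ≤ ν₀ a)
    (h₁ : ∀ b, 0 ≤ ν₁ b) (hs₀ : ∑ a, ν₀ a = 1) (hs₁ : ∑ b, ν₁ b = 1) {t : ℝ}
    (ht : t < Wass d ν₀ ν₁) : ∃ f, Lip1 d f ∧ t < ∑ b, f b * ν₁ b - ∑ a, f a * ν₀ a := by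
  have : Nonempty V := by
    by_contra hV
    simp [not_nonempty_iff.mp hV] at hs₀
  obtain ⟨g, h, hgh, hlt⟩ := exists_potentials_of_lt_cost h₀ h₁ hs₀ hs₁
    fun π hπ => ht.trans_le (wass_le_cost hd.nonneg hπ)
  obtain ⟨f, hf, hhf, hfg⟩ := exists_lip1_between hd.self hd.triangle hgh
  refine ⟨f, hf, hlt.trans_le (sub_le_sub ?_ ?_)⟩
  · exact sum_le_sum fun b _ => mul_le_mul_of_nonneg_right (hhf b) (h₁ b)
  · exact sum_le_sum fun a _ => mul_le_mul_of_nonneg_right (hfg a) (h₀ a)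

end Kantorovich

section Laplacian

variable [Fintype V] {P : Matrix V V ℝ} {w : V}

theorem nu_nonneg (hP : P ∈ Matrix.rowStochastic ℝ V) {ε : ℝ} (hε₀ : 0 ≤ ε) (hε₁ : ε ≤ 1)
    (z : V) : 0 ≤ nu P ε w z := by
  unfold nu
  split_ifs
  exacts [sub_nonneg.mpr hε₁, mul_nonneg hε₀ (Matrix.nonneg_of_mem_rowStochastic hP)]

theorem sum_mul_nu (hP₀ : P w w = 0) (ε : ℝ) (f : V → ℝ) :
    ∑ z, f z * nu P ε w z = f w - ε * chungL P f w := by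
  have hnu : ∀ z, f z * nu P ε w z = ε * (P w z * f z) + if z = w then (1 - ε) * f z else 0 :=
    fun z => by
      unfold nu
      split_ifs with h
      · rw [h, hP₀]
        ring
      · ring
  simp only [hnu, sum_add_distrib, ← mul_sum, sum_ite_eq', mem_univ, if_true, chungL]
  ring

theorem sum_nu (hP : P ∈ Matrix.rowStochastic ℝ V) (hP₀ : P w w = 0) (ε : ℝ) :
    ∑ z, nu P ε w z = 1 := by
  simpa [chungL, Matrix.sum_row_of_mem_rowStochastic hP] using sum_mul_nu hP₀ ε fun _ => 1

theorem chungL_sub_const (hP : P ∈ Matrix.rowStochastic ℝ V) (f : V → ℝ) (c : ℝ) :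
    chungL P (fun z => f z - c) w = chungL P f w := by
  simp only [chungL, mul_sub, sum_sub_distrib, ← sum_mul, Matrix.sum_row_of_mem_rowStochastic hP]
  ring

theorem continuous_chungL (P : Matrix V V ℝ) (w : V) :
    Continuous fun f : V → ℝ => chungL P f w := by
  unfold chungL
  fun_prop

end Laplacian

theorem isCompact_setOf_lip1 [Finite V] (d : V → V → ℝ) (x : V) :
    IsCompact {f : V → ℝ | Lip1 d f ∧ f x = 0} := by
  have hLip : IsClosed {f : V → ℝ | Lip1 d f} := by
    simp only [Lip1, Set.ofPred_forall]
    exact isClosed_iInter fun a => isClosed_iInter fun b =>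
      isClosed_le ((continuous_apply b).sub (continuous_apply a)) continuous_const
  have hclosed : IsClosed {f : V → ℝ | Lip1 d f ∧ f x = 0} :=
    hLip.inter (isClosed_eq (continuous_apply x) continuous_const)
  refine (isCompact_univ_pi fun z => isCompact_Icc (a := -d z x) (b := d x z)).of_isClosed_subset
    hclosed fun f ⟨hf, hfx⟩ => Set.mem_univ_pi.mpr fun z => ⟨?_, ?_⟩
  · linarith [hf z x]
  · linarith [hf x z]

section Curvature

variable [Fintype V] {d : V → V → ℝ} {P : Matrix V V ℝ} {x y : V} {f : V → ℝ}

theorem sum_mul_nu_sub_sum_mul_nu (hP₀ : ∀ a, P a a = 0) (ε : ℝ) (f : V → ℝ) :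
    ∑ z, f z * nu P ε y z - ∑ z, f z * nu P ε x z
      = f y - f x - ε * (chungL P f y - chungL P f x) := by
  rw [sum_mul_nu (hP₀ y), sum_mul_nu (hP₀ x)]
  ring

theorem sub_le_wass_nu (hP : P ∈ Matrix.rowStochastic ℝ V) (hP₀ : ∀ a, P a a = 0)
    (hf : Lip1 d f) {ε : ℝ} (hε₀ : 0 ≤ ε) (hε₁ : ε ≤ 1) :
    f y - f x - ε * (chungL P f y - chungL P f x) ≤ Wass d (nu P ε x) (nu P ε y) := by
  rw [← sum_mul_nu_sub_sum_mul_nu hP₀]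
  exact sum_mul_sub_sum_mul_le_wass hf <| isCoupling_mul (nu_nonneg hP hε₀ hε₁)
    (nu_nonneg hP hε₀ hε₁) (sum_nu hP (hP₀ x) ε) (sum_nu hP (hP₀ y) ε)

theorem exists_lip1_wass_nu_le (hd : IsQuasiMetric d) (hP : P ∈ Matrix.rowStochastic ℝ V)
    (hP₀ : ∀ a, P a a = 0) {ε : ℝ} (hε₀ : 0 ≤ ε) (hε₁ : ε ≤ 1) {δ : ℝ} (hδ : 0 < δ) :
    ∃ f, Lip1 d f ∧ f x = 0 ∧
      Wass d (nu P ε x) (nu P ε y) ≤ f y - f x - ε * (chungL P f y - chungL P f x) + δ := by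
  obtain ⟨f, hf, hlt⟩ := exists_lip1_lt_sum_mul_sub_sum_mul hd (nu_nonneg hP hε₀ hε₁)
    (nu_nonneg hP hε₀ hε₁) (sum_nu hP (hP₀ x) ε) (sum_nu hP (hP₀ y) ε)
    (sub_lt_self (Wass d (nu P ε x) (nu P ε y)) hδ)
  refine ⟨fun z => f z - f x, fun a b => ?_, sub_self _, ?_⟩
  · linarith [hf a b]
  · rw [chungL_sub_const hP, chungL_sub_const hP]
    rw [sum_mul_nu_sub_sum_mul_nu hP₀] at hlt
    linarith

theorem le_chungL_sub_of_tendsto (hP : P ∈ Matrix.rowStochastic ℝ V) (hP₀ : ∀ a, P a a = 0)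
    {K : ℝ} (hK : Tendsto (fun ε => (d x y - Wass d (nu P ε x) (nu P ε y)) / ε) (𝓝[>] 0) (𝓝 K))
    (hf : Lip1 d f) (hfxy : f y - f x = d x y) : K ≤ chungL P f y - chungL P f x := by
  refine le_of_tendsto hK ?_
  filter_upwards [Ioc_mem_nhdsGT zero_lt_one] with ε ⟨hε₀, hε₁⟩
  rw [div_le_iff₀ hε₀]
  linarith [sub_le_wass_nu (x := x) (y := y) hP hP₀ hf hε₀.le hε₁]

theorem exists_lip1_chungL_sub_le_of_tendsto (hd : IsQuasiMetric d)
    (hP : P ∈ Matrix.rowStochastic ℝ V) (hP₀ : ∀ a, P a a = 0) {K : ℝ}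
    (hK : Tendsto (fun ε => (d x y - Wass d (nu P ε x) (nu P ε y)) / ε) (𝓝[>] 0) (𝓝 K)) :
    ∃ g, Lip1 d g ∧ g y - g x = d x y ∧ chungL P g y - chungL P g x ≤ K := by
  obtain ⟨ε, -, hε01, hε0⟩ := exists_seq_strictAnti_tendsto' (zero_lt_one' ℝ)
  have hε : Tendsto ε atTop (𝓝[>] 0) :=
    tendsto_nhdsWithin_iff.2 ⟨hε0, .of_forall fun n => (hε01 n).1⟩
  choose f hf hfx hW using fun n =>
    exists_lip1_wass_nu_le (x := x) (y := y) hd hP hP₀ (hε01 n).1.le (hε01 n).2.le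
      (pow_pos (hε01 n).1 2)
  obtain ⟨g, ⟨hg, -⟩, φ, hφ, hfg⟩ :=
    (isCompact_setOf_lip1 d x).tendsto_subseq fun n => ⟨hf n, hfx n⟩
  have hεφ : Tendsto (ε ∘ φ) atTop (𝓝[>] 0) := hε.comp hφ.tendsto_atTop
  have hεφ₀ : Tendsto (ε ∘ φ) atTop (𝓝 0) := hεφ.mono_right nhdsWithin_le_nhds
  have hKφ := hK.comp hεφ
  have hWφ : Tendsto (fun n => Wass d (nu P (ε (φ n)) x) (nu P (ε (φ n)) y)) atTop
      (𝓝 (d x y)) := by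
    have := (hεφ₀.mul hKφ).const_sub (d x y)
    rw [zero_mul, sub_zero] at this
    refine this.congr fun n => ?_
    simp only [Function.comp, mul_div_cancel₀ _ (hε01 (φ n)).1.ne']
    ring
  have hΔ : Tendsto (fun n => f (φ n) y - f (φ n) x) atTop (𝓝 (g y - g x)) :=
    (tendsto_pi_nhds.1 hfg y).sub (tendsto_pi_nhds.1 hfg x)
  have hLw : ∀ w, Tendsto (fun n => chungL P (f (φ n)) w) atTop (𝓝 (chungL P g w)) :=
    fun w => ((continuous_chungL P w).tendsto g).comp hfg
  have hL := (hLw y).sub (hLw x)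
  refine ⟨g, hg, le_antisymm (hg x y) ?_, ?_⟩
  · have hlim := (hΔ.sub (hεφ₀.mul hL)).add (hεφ₀.pow 2)
    rw [zero_mul, sub_zero, zero_pow two_ne_zero, add_zero] at hlim
    exact le_of_tendsto_of_tendsto' hWφ hlim fun n => hW (φ n)
  · refine le_of_tendsto_of_tendsto' (sub_zero (chungL P g y - chungL P g x) ▸ hL.sub hεφ₀)
      hKφ fun n => ?_
    have := hW (φ n)
    have := hf (φ n) x y
    simp only [Function.comp]
    rw [le_div_iff₀ (hε01 (φ n)).1]
    nlinarith

theorem isLeast_curvature (hd : IsQuasiMetric d) (hP : P ∈ Matrix.rowStochastic ℝ V)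
    (hP₀ : ∀ a, P a a = 0) (hxy : 0 < d x y) {k : ℝ}
    (hk : Tendsto (fun ε => (1 - Wass d (nu P ε x) (nu P ε y) / d x y) / ε) (𝓝[>] 0) (𝓝 k)) :
    IsLeast {r | ∃ f, Lip1 d f ∧ (f y - f x) / d x y = 1 ∧
      r = (chungL P f y - chungL P f x) / d x y} k := by
  have hK : Tendsto (fun ε => (d x y - Wass d (nu P ε x) (nu P ε y)) / ε) (𝓝[>] 0)
      (𝓝 (k * d x y)) := by
    refine (hk.mul_const (d x y)).congr fun ε => ?_
    rw [div_mul_eq_mul_div, sub_mul, one_mul, div_mul_cancel₀ _ hxy.ne']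
  constructor
  · obtain ⟨g, hg, hgxy, hgK⟩ := exists_lip1_chungL_sub_le_of_tendsto hd hP hP₀ hK
    refine ⟨g, hg, by rw [hgxy, div_self hxy.ne'], ?_⟩
    rw [eq_div_iff hxy.ne']
    exact le_antisymm (le_chungL_sub_of_tendsto hP hP₀ hK hg hgxy) hgK
  · rintro r ⟨f, hf, hfxy, rfl⟩
    rw [div_eq_one_iff_eq hxy.ne'] at hfxy
    rw [le_div_iff₀ hxy]
    exact le_chungL_sub_of_tendsto hP hP₀ hK hf hfxy

end Curvature

section GraphDistance

variable {μ : V → V → ℝ} {x y z : V}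

theorem hasPathLen_zero (μ : V → V → ℝ) (x : V) : HasPathLen μ x x 0 :=
  ⟨fun _ => x, rfl, rfl, fun _ hi => absurd hi (Nat.not_lt_zero _)⟩

theorem HasPathLen.append {n₁ n₂ : ℕ} (h₁ : HasPathLen μ x y n₁) (h₂ : HasPathLen μ y z n₂) :
    HasPathLen μ x z (n₁ + n₂) := by
  obtain ⟨c₁, hc₁0, hc₁n, hc₁⟩ := h₁
  obtain ⟨c₂, hc₂0, hc₂n, hc₂⟩ := h₂
  set c : ℕ → V := fun i => if i ≤ n₁ then c₁ i else c₂ (i - n₁)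
  have hc₂' : ∀ j, c (n₁ + j) = c₂ j := fun j => by
    rcases j.eq_zero_or_pos with rfl | hj
    · simp [c, hc₁n, hc₂0]
    · simp [c, hj.ne']
  refine ⟨c, by simp [c, hc₁0], by rw [hc₂', hc₂n], fun i hi => ?_⟩
  rcases lt_or_ge i n₁ with hi₁ | hi₁
  · simpa [c, hi₁.le, Nat.succ_le_of_lt hi₁] using hc₁ i hi₁
  · obtain ⟨j, rfl⟩ := Nat.exists_eq_add_of_le hi₁
    rw [hc₂', add_assoc, hc₂']
    exact hc₂ j (by omega)

theorem gdist_eq_find (h : ∃ n, HasPathLen μ x y n) : gdist μ x y = Nat.find h :=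
  IsLeast.csInf_eq
    ⟨⟨_, rfl, Nat.find_spec h⟩, fun _ ⟨_, hr, hn⟩ => hr ▸ mod_cast Nat.find_min' h hn⟩

theorem gdist_le {n : ℕ} (h : HasPathLen μ x y n) : gdist μ x y ≤ n := by
  rw [gdist_eq_find ⟨n, h⟩]
  exact mod_cast Nat.find_min' _ h

theorem gdist_nonneg (μ : V → V → ℝ) (x y : V) : 0 ≤ gdist μ x y :=
  Real.sInf_nonneg fun _ ⟨_, hr, _⟩ => hr ▸ Nat.cast_nonneg _

theorem gdist_self (μ : V → V → ℝ) (x : V) : gdist μ x x = 0 :=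
  le_antisymm (by simpa using gdist_le (hasPathLen_zero μ x)) (gdist_nonneg μ x x)

theorem gdist_triangle (hconn : StronglyConnectedW μ) (x y z : V) :
    gdist μ x z ≤ gdist μ x y + gdist μ y z := by
  rw [gdist_eq_find (hconn x y), gdist_eq_find (hconn y z)]
  exact_mod_cast gdist_le ((Nat.find_spec (hconn x y)).append (Nat.find_spec (hconn y z)))

theorem gdist_pos (hconn : StronglyConnectedW μ) (hxy : x ≠ y) : 0 < gdist μ x y := by
  rw [gdist_eq_find (hconn x y), Nat.cast_pos, Nat.pos_iff_ne_zero]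
  intro h0
  obtain ⟨c, hc0, hcn, -⟩ := h0 ▸ Nat.find_spec (hconn x y)
  exact hxy (hc0 ▸ hcn)

theorem isQuasiMetric_gdist (hconn : StronglyConnectedW μ) : IsQuasiMetric (gdist μ) :=
  ⟨gdist_nonneg μ, gdist_self μ, gdist_triangle hconn⟩

theorem exists_pos_of_stronglyConnected (hconn : StronglyConnectedW μ) (hxy : x ≠ y) :
    ∃ z, 0 < μ x z := by
  obtain ⟨n, c, hc0, hcn, hc⟩ := hconn x y
  rcases n.eq_zero_or_pos with rfl | hn
  · exact absurd (hc0 ▸ hcn) hxy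
  · exact ⟨c 1, hc0 ▸ hc 0 hn⟩

end GraphDistance

section MeanKernel

variable [Fintype V] {μ : V → V → ℝ} {m : V → ℝ}

theorem vdeg_pos (hnn : Nonneg μ) (hconn : StronglyConnectedW μ) {x y : V} (hxy : x ≠ y)
    (w : V) : 0 < vdeg μ w := by
  obtain ⟨v, hwv⟩ : ∃ v, w ≠ v := if h : w = x then ⟨y, h ▸ hxy⟩ else ⟨x, h⟩
  obtain ⟨z, hz⟩ := exists_pos_of_stronglyConnected hconn hwv
  exact hz.trans_le (single_le_sum (fun i _ => hnn w i) (mem_univ z))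

theorem sum_transP {x : V} (hx : 0 < vdeg μ x) : ∑ z, transP μ x z = 1 := by
  simp only [transP, ← sum_div]
  exact div_self hx.ne'

theorem meanK_mem_rowStochastic (hnn : Nonneg μ) (hm : IsPerron μ m)
    (hv : ∀ x, 0 < vdeg μ x) : Matrix.of (meanK μ m) ∈ Matrix.rowStochastic ℝ V := by
  simp only [Matrix.mem_rowStochastic_iff_sum, Matrix.of_apply]
  refine ⟨fun x z => ?_, fun x => ?_⟩
  · have := div_nonneg (hm.1 z).le (hm.1 x).le
    have := div_nonneg (hnn x z) (hv x).le
    have := div_nonneg (hnn z x) (hv z).le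
    unfold meanK transP
    positivity
  · have hback : ∑ z, m z / m x * transP μ z x = 1 := by
      simp only [div_mul_eq_mul_div, ← sum_div, ← hm.2.2 x, div_self (hm.1 x).ne']
    simp only [meanK, ← sum_div, sum_add_distrib, sum_transP (hv x), hback]
    norm_num

theorem meanK_self (hsimple : IsSimpleW μ) (x : V) : meanK μ m x x = 0 := by
  simp [meanK, transP, hsimple x]

end MeanKernel

/-- limit-free formula for the directed Ricci curvature. -/
theorem ricci_limit_free_formula
    {V : Type*} [Fintype V] (μ : V → V → ℝ) (m : V → ℝ)
    (hnn : Nonneg μ) (hsimple : IsSimpleW μ) (hconn : StronglyConnectedW μ)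
    (hm : IsPerron μ m) (x y : V) (hxy : x ≠ y) (k : ℝ)
    (hk : Tendsto (fun ε => kappaEps μ m ε x y / ε) (𝓝[>] (0:ℝ)) (𝓝 k)) :
    k = sInf {r : ℝ | ∃ f, Lip1 (gdist μ) f ∧ (f y - f x) / gdist μ x y = 1 ∧
          r = (chungL (meanK μ m) f y - chungL (meanK μ m) f x) / gdist μ x y} := by
  have hP := meanK_mem_rowStochastic hnn hm (vdeg_pos hnn hconn hxy)
  exact (isLeast_curvature (isQuasiMetric_gdist hconn) hP (meanK_self hsimple)
    (gdist_pos hconn hxy) hk).csInf_eq.symm
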